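/- Let X_1, ..., X_n be i.i.d. nonnegative with distribution F, E[X_1] < ∞, and let M̂(u) = Σ_{i=1}^n (X_i - u)1_{X_i > u} / Σ_{i=1}^n 1_{X_i > u} be the empirical mean excess function and M(u) = E[X - u | X > u]. Then for any b with F(b) < 1, sup_{0 ≤ u ≤ b} |M̂(u) - M(u)| → 0 almost surely as n → ∞. -/

import Mathlib

/-!
The empirical mean excess function is the mean excess function `u ↦ π(u) / ν(u, ∞)` of the
empirical measure, where `π(u) = ∫ (y - u)⁺ dν` is the stop-loss transform. Numerator and
denominator converge uniformly on `[0, b]` almost surely. The stop-loss transform of every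
probability measure is 1-Lipschitz, so the strong law at the rationals suffices for it. The
survival function is only monotone; as in Glivenko–Cantelli, cover `[0, b]` by finitely many
intervals `[a, c)` of small open mass `ν(a, c)` and apply the strong law to `ν(a, ∞)` and
`ν[c, ∞)`, which sandwich `ν(u, ∞)` for `u ∈ [a, c)`. Since `ν(b, ∞) > 0`, the denominator is
bounded away from zero on `[0, b]`, so the quotients converge uniformly as well.
-/

open MeasureTheory ProbabilityTheory Real Set Filter Topology
open scoped Classical

theorem tendstoUniformlyOn_of_lipschitzWith_of_denseRange {ι α β κ : Type*}
    [PseudoMetricSpace α] [PseudoMetricSpace β] {l : Filter ι}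
    {g : ι → α → β} {f : α → β} {L : NNReal} {d : κ → α} (hd : DenseRange d) {K : Set α}
    (hK : IsCompact K) (hg : ∀ i, LipschitzWith L (g i)) (hf : LipschitzWith L f)
    (h : ∀ k, Tendsto (fun i => g i (d k)) l (𝓝 (f (d k)))) :
    TendstoUniformlyOn g f l K := by
  rw [Metric.tendstoUniformlyOn_iff]
  intro ε hε
  obtain ⟨δ, hδ, hLδ⟩ := exists_pos_mul_lt (show 0 < ε / 3 by positivity) (L : ℝ)
  obtain ⟨T, hKT⟩ : ∃ T : Finset κ, K ⊆ ⋃ k ∈ T, Metric.ball (d k) δ := by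
    refine hK.elim_finite_subcover (fun k => Metric.ball (d k) δ) (fun _ => Metric.isOpen_ball)
      fun x _ => mem_iUnion.2 ?_
    simpa only [Metric.mem_ball, dist_comm x] using hd.exists_dist_lt x hδ
  have hT : ∀ᶠ i in l, ∀ k ∈ T, dist (f (d k)) (g i (d k)) < ε / 3 :=
    (Finset.eventually_all T).2 fun k _ =>
      (Metric.tendsto_nhds.1 (h k) (ε / 3) (by positivity)).mono fun i hi => by
        rwa [dist_comm]
  filter_upwards [hT] with i hi x hx
  obtain ⟨k, hkT, hxk⟩ := mem_iUnion₂.1 (hKT hx)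
  have hfx : dist (f x) (f (d k)) ≤ L * δ :=
    (hf.dist_le_mul _ _).trans (by gcongr; exact le_of_lt hxk)
  have hgx : dist (g i (d k)) (g i x) ≤ L * δ :=
    ((hg i).dist_le_mul _ _).trans (by gcongr; rw [dist_comm]; exact le_of_lt hxk)
  linarith [dist_triangle4 (f x) (f (d k)) (g i (d k)) (g i x), hi k hkT]

theorem TendstoUniformlyOn.div₀ {ι α : Type*} {l : Filter ι} {F G : ι → α → ℝ} {f g : α → ℝ}
    {K : Set α} {C c : ℝ} (hF : TendstoUniformlyOn F f l K) (hG : TendstoUniformlyOn G g l K)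
    (hf : ∀ x ∈ K, |f x| ≤ C) (hc : 0 < c) (hg : ∀ x ∈ K, c ≤ |g x|) :
    TendstoUniformlyOn (fun i x => F i x / G i x) (fun x => f x / g x) l K := by
  rw [Metric.tendstoUniformlyOn_iff] at *
  intro ε hε
  set η := min (c / 2) (ε / (2 * (c + |C|) / c ^ 2))
  have hη : 0 < η := by positivity
  have hηc : η ≤ c / 2 := min_le_left _ _
  have hηε : η * (2 * (c + |C|) / c ^ 2) ≤ ε := (le_div_iff₀ (by positivity)).1 (min_le_right _ _)
  filter_upwards [hF η hη, hG η hη] with i hFi hGi x hx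
  have hgx := hg x hx
  have hfx := hf x hx
  specialize hFi x hx
  specialize hGi x hx
  rw [Real.dist_eq] at hFi hGi
  rw [abs_sub_comm] at hGi
  have hGx : c / 2 ≤ |G i x| := by
    linarith [abs_sub_abs_le_abs_sub (g x) (G i x), abs_sub_comm (g x) (G i x)]
  have hg0 : g x ≠ 0 := abs_pos.1 (hc.trans_le hgx)
  have hG0 : G i x ≠ 0 := abs_pos.1 ((half_pos hc).trans_le hGx)
  have hC : |f x| ≤ |C| := hfx.trans (le_abs_self C)
  have h1 : |f x - F i x| / |G i x| < η / (c / 2) := by gcongr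
  have h2 : |f x| * |G i x - g x| / (|g x| * |G i x|) ≤ |C| * η / (c * (c / 2)) := by gcongr
  calc |f x / g x - F i x / G i x|
      = |(f x - F i x) / G i x + f x * (G i x - g x) / (g x * G i x)| := by
        congr 1; field_simp; ring
    _ ≤ |f x - F i x| / |G i x| + |f x| * |G i x - g x| / (|g x| * |G i x|) := by
        rw [← abs_div, ← abs_mul, ← abs_mul, ← abs_div]; exact abs_add_le _ _
    _ < η / (c / 2) + |C| * η / (c * (c / 2)) := add_lt_add_of_lt_of_le h1 h2
    _ = η * (2 * (c + |C|) / c ^ 2) := by field_simp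
    _ ≤ ε := hηε

theorem TendstoUniformlyOn.tendsto_sSup_abs_sub {ι α : Type*} {l : Filter ι} {F : ι → α → ℝ}
    {f : α → ℝ} {K : Set α} (h : TendstoUniformlyOn F f l K) :
    Tendsto (fun i => sSup ((fun x => |F i x - f x|) '' K)) l (𝓝 0) := by
  rw [Metric.tendstoUniformlyOn_iff] at h
  rw [Metric.tendsto_nhds]
  intro ε hε
  filter_upwards [h (ε / 2) (half_pos hε)] with i hi
  have hle : sSup ((fun x => |F i x - f x|) '' K) ≤ ε / 2 := by
    refine Real.sSup_le ?_ (half_pos hε).le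
    rintro _ ⟨x, hx, rfl⟩
    dsimp only
    rw [← Real.dist_eq, dist_comm]
    exact (hi x hx).le
  have h0 : 0 ≤ sSup ((fun x => |F i x - f x|) '' K) :=
    Real.sSup_nonneg (by rintro _ ⟨x, -, rfl⟩; exact abs_nonneg _)
  rw [Real.dist_eq, sub_zero, abs_of_nonneg h0]
  linarith

theorem eventually_measureReal_Ioo_le (ν : Measure ℝ) [IsLocallyFiniteMeasure ν] (x : ℝ)
    {ε : ℝ} (hε : 0 < ε) :
    ∀ᶠ δ in 𝓝[>] (0 : ℝ), ν.real (Ioo (x - δ) x) ≤ ε ∧ ν.real (Ioo x (x + δ)) ≤ ε := by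
  have hleft : Tendsto (fun δ => ν (Ioo (x - δ) x)) (𝓝[>] 0) (𝓝 0) := by
    have hempty : ⋂ δ > (0 : ℝ), Ioo (x - δ) x = ∅ :=
      eq_empty_of_forall_notMem fun y hy => by
        have := (mem_iInter₂.1 hy (x - y) (sub_pos.2 (mem_iInter₂.1 hy 1 one_pos).2)).1
        linarith
    simpa [hempty, Function.comp_def] using
      tendsto_measure_biInter_gt (μ := ν) (s := fun δ => Ioo (x - δ) x)
        (fun _ _ => nullMeasurableSet_Ioo)
        (fun _ _ _ hij => Ioo_subset_Ioo_left (by linarith)) ⟨1, one_pos, measure_Ioo_lt_top.ne⟩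
  have hright : Tendsto (fun δ => ν (Ioo x (x + δ))) (𝓝[>] 0) (𝓝 0) := by
    have hempty : ⋂ δ > (0 : ℝ), Ioo x (x + δ) = ∅ :=
      eq_empty_of_forall_notMem fun y hy => by
        have := (mem_iInter₂.1 hy (y - x) (sub_pos.2 (mem_iInter₂.1 hy 1 one_pos).1)).2
        linarith
    simpa [hempty, Function.comp_def] using
      tendsto_measure_biInter_gt (μ := ν) (s := fun δ => Ioo x (x + δ))
        (fun _ _ => nullMeasurableSet_Ioo)
        (fun _ _ _ hij => Ioo_subset_Ioo_right (by linarith)) ⟨1, one_pos, measure_Ioo_lt_top.ne⟩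
  have hε' : (0 : ENNReal) < ENNReal.ofReal ε := ENNReal.ofReal_pos.2 hε
  filter_upwards [hleft.eventually_lt_const hε', hright.eventually_lt_const hε'] with δ h1 h2
  exact ⟨ENNReal.toReal_le_of_le_ofReal hε.le h1.le, ENNReal.toReal_le_of_le_ofReal hε.le h2.le⟩

theorem exists_finset_forall_measureReal_Ioo_le (ν : Measure ℝ) [IsLocallyFiniteMeasure ν]
    {K : Set ℝ} (hK : IsCompact K) {ε : ℝ} (hε : 0 < ε) :
    ∃ S : Finset ℝ, ∀ u ∈ K, ∃ a ∈ S, ∃ c ∈ S, a ≤ u ∧ u < c ∧ ν.real (Ioo a c) ≤ ε := by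
  choose δ hδ hδε using fun x =>
    ((eventually_measureReal_Ioo_le ν x hε).and self_mem_nhdsWithin).exists
  obtain ⟨T, -, hKT⟩ := hK.elim_nhds_subcover (fun x => Ioo (x - δ x) (x + δ x))
    fun x _ => Ioo_mem_nhds (by linarith [hδε x]) (by linarith [hδε x])
  set S := T.biUnion fun x => ({x - δ x, x, x + δ x} : Finset ℝ)
  refine ⟨S, fun u hu => ?_⟩
  obtain ⟨x, hxT, hux⟩ := mem_iUnion₂.1 (hKT hu)
  have hmem : ∀ y ∈ ({x - δ x, x, x + δ x} : Finset ℝ), y ∈ S :=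
    fun y hy => Finset.mem_biUnion.2 ⟨x, hxT, hy⟩
  rcases lt_or_ge u x with hlt | hge
  · exact ⟨x - δ x, hmem _ (by simp), x, hmem _ (by simp), hux.1.le, hlt, (hδ x).1⟩
  · exact ⟨x, hmem _ (by simp), x + δ x, hmem _ (by simp), hge, hux.2, (hδ x).2⟩

theorem abs_measureReal_Ioi_sub_le {ν ν' : Measure ℝ} [IsFiniteMeasure ν] [IsFiniteMeasure ν']
    {a u c δ : ℝ} (hau : a ≤ u) (huc : u < c)
    (ha : |ν'.real (Ioi a) - ν.real (Ioi a)| ≤ δ) (hc : |ν'.real (Ici c) - ν.real (Ici c)| ≤ δ) :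
    |ν'.real (Ioi u) - ν.real (Ioi u)| ≤ δ + ν.real (Ioo a c) := by
  have hsplit : ν.real (Ioi a) = ν.real (Ioo a c) + ν.real (Ici c) := by
    rw [← Ioo_union_Ici_eq_Ioi (hau.trans_lt huc),
      measureReal_union ((Iio_disjoint_Ici le_rfl).mono_left Ioo_subset_Iio_self)
        measurableSet_Ici]
  have h1 : ν'.real (Ioi u) ≤ ν'.real (Ioi a) := measureReal_mono (Ioi_subset_Ioi hau)
  have h2 : ν'.real (Ici c) ≤ ν'.real (Ioi u) := measureReal_mono (Ici_subset_Ioi.2 huc)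
  have h3 : ν.real (Ioi u) ≤ ν.real (Ioi a) := measureReal_mono (Ioi_subset_Ioi hau)
  have h4 : ν.real (Ici c) ≤ ν.real (Ioi u) := measureReal_mono (Ici_subset_Ioi.2 huc)
  rw [abs_le] at *
  constructor <;> linarith

theorem exists_countable_tendstoUniformlyOn_measureReal_Ioi (ν : Measure ℝ) [IsFiniteMeasure ν]
    {K : Set ℝ} (hK : IsCompact K) {ι : Type*} (l : Filter ι) :
    ∃ Q : Set ℝ, Q.Countable ∧ ∀ νs : ι → Measure ℝ, (∀ i, IsFiniteMeasure (νs i)) →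
      (∀ s ∈ Q, Tendsto (fun i => (νs i).real (Ioi s)) l (𝓝 (ν.real (Ioi s))) ∧
        Tendsto (fun i => (νs i).real (Ici s)) l (𝓝 (ν.real (Ici s)))) →
      TendstoUniformlyOn (fun i u => (νs i).real (Ioi u)) (fun u => ν.real (Ioi u)) l K := by
  choose S hS using fun k : ℕ =>
    exists_finset_forall_measureReal_Ioo_le ν hK (Nat.one_div_pos_of_nat (n := k))
  refine ⟨⋃ k, S k, countable_iUnion fun k => (S k).countable_toSet, fun νs hfin hQ => ?_⟩
  rw [Metric.tendstoUniformlyOn_iff]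
  intro ε hε
  obtain ⟨k, hk⟩ := exists_nat_one_div_lt (half_pos hε)
  have hnet : ∀ᶠ i in l, ∀ s ∈ S k, |(νs i).real (Ioi s) - ν.real (Ioi s)| < ε / 2 ∧
      |(νs i).real (Ici s) - ν.real (Ici s)| < ε / 2 := by
    refine (Finset.eventually_all _).2 fun s hs => ?_
    obtain ⟨hIoi, hIci⟩ := hQ s (mem_iUnion.2 ⟨k, hs⟩)
    exact (Metric.tendsto_nhds.1 hIoi _ (half_pos hε)).and
      (Metric.tendsto_nhds.1 hIci _ (half_pos hε))
  filter_upwards [hnet] with i hi u hu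
  obtain ⟨a, haS, c, hcS, hau, huc, hac⟩ := hS k u hu
  have := abs_measureReal_Ioi_sub_le hau huc (hi a haS).1.le (hi c hcS).2.le
  rw [Real.dist_eq, abs_sub_comm]
  linarith

-- For `n = 0` this is the zero measure: the factor `(0 : ℝ≥0∞)⁻¹ = ∞` meets an empty sum.
noncomputable def empiricalMeasure {α : Type*} [MeasurableSpace α] (x : ℕ → α) (n : ℕ) :
    Measure α :=
  (n : ENNReal)⁻¹ • ∑ i ∈ Finset.range n, Measure.dirac (x i)

section EmpiricalMeasure

variable {α : Type*} [MeasurableSpace α] (x : ℕ → α) (n : ℕ)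

instance : IsZeroOrProbabilityMeasure (empiricalMeasure x n) := by
  rw [isZeroOrProbabilityMeasure_iff]
  rcases Nat.eq_zero_or_pos n with rfl | hn
  · simp [empiricalMeasure]
  · right
    simp [empiricalMeasure,
      ENNReal.inv_mul_cancel (Nat.cast_ne_zero.2 hn.ne') (ENNReal.natCast_ne_top n)]

variable [MeasurableSingletonClass α]

theorem integrable_empiricalMeasure (f : α → ℝ) : Integrable f (empiricalMeasure x n) := by
  rcases Nat.eq_zero_or_pos n with rfl | hn
  · simp [empiricalMeasure]
  · refine Integrable.smul_measure (integrable_finsetSum_measure.2 fun i _ => ?_) (by simp [hn.ne'])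
    exact integrable_dirac enorm_lt_top

theorem integral_empiricalMeasure (f : α → ℝ) :
    ∫ y, f y ∂empiricalMeasure x n = (∑ i ∈ Finset.range n, f (x i)) / n := by
  rw [empiricalMeasure, integral_smul_measure,
    integral_finsetSum_measure fun i _ => integrable_dirac enorm_lt_top]
  simp [integral_dirac, div_eq_inv_mul]

theorem measureReal_empiricalMeasure {s : Set α} (hs : MeasurableSet s) :
    (empiricalMeasure x n).real s = (∑ i ∈ Finset.range n, s.indicator 1 (x i)) / n := by
  rw [← integral_indicator_one hs, integral_empiricalMeasure]

end EmpiricalMeasure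

noncomputable def stopLoss (ν : Measure ℝ) (u : ℝ) : ℝ := ∫ y, max (y - u) 0 ∂ν

noncomputable def meanExcess (ν : Measure ℝ) (u : ℝ) : ℝ := stopLoss ν u / ν.real (Ioi u)

theorem lipschitzWith_stopLoss (ν : Measure ℝ) [IsZeroOrProbabilityMeasure ν]
    (hν : Integrable id ν) : LipschitzWith 1 (stopLoss ν) := by
  have hint : ∀ u : ℝ, Integrable (fun y => max (y - u) 0) ν :=
    fun u => (hν.sub (integrable_const u)).pos_part
  refine LipschitzWith.of_dist_le_mul fun u v => ?_
  rw [stopLoss, stopLoss, dist_eq_norm, ← integral_sub (hint u) (hint v), NNReal.coe_one, one_mul]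
  calc ‖∫ y, (max (y - u) 0 - max (y - v) 0) ∂ν‖ ≤ dist u v * ν.real univ :=
        norm_integral_le_of_norm_le_const <| .of_forall fun y => by
          simpa [Real.dist_eq, abs_sub_comm] using abs_max_sub_max_le_abs (y - u) (y - v) 0
    _ ≤ dist u v := mul_le_of_le_one_right dist_nonneg measureReal_le_one

theorem max_sub_zero_eq_ite {α : Type*} [AddCommGroup α] [LinearOrder α] [IsOrderedAddMonoid α]
    (y u : α) : max (y - u) 0 = if u < y then y - u else 0 := by
  split_ifs with h
  · exact max_eq_left (sub_nonneg.2 h.le)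
  · exact max_eq_right (sub_nonpos.2 (not_lt.1 h))

theorem meanExcess_empiricalMeasure (x : ℕ → ℝ) (n : ℕ) (u : ℝ) :
    meanExcess (empiricalMeasure x n) u =
      (∑ i ∈ Finset.range n, if u < x i then x i - u else 0)
        / (∑ i ∈ Finset.range n, if u < x i then (1 : ℝ) else 0) := by
  rw [meanExcess, stopLoss, integral_empiricalMeasure,
    measureReal_empiricalMeasure _ _ measurableSet_Ioi]
  simp_rw [max_sub_zero_eq_ite]
  rcases Nat.eq_zero_or_pos n with rfl | hn
  · simp
  · exact div_div_div_cancel_right₀ (by positivity) _ _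

theorem meanExcess_map {Ω : Type*} [MeasurableSpace Ω] {μ : Measure Ω} {Y : Ω → ℝ}
    (hY : Measurable Y) (u : ℝ) :
    meanExcess (μ.map Y) u =
      (∫ ω in {ω | u < Y ω}, (Y ω - u) ∂μ) / (μ {ω | u < Y ω}).toReal := by
  rw [meanExcess, stopLoss, integral_map hY.aemeasurable (by fun_prop), measureReal_def,
    Measure.map_apply hY measurableSet_Ioi,
    ← integral_indicator (measurableSet_lt measurable_const hY)]
  simp_rw [max_sub_zero_eq_ite]
  rfl

section StrongLaw

variable {Ω : Type*} [MeasurableSpace Ω] {μ : Measure Ω} {X : ℕ → Ω → ℝ}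

theorem ae_tendsto_integral_empiricalMeasure (hindep : Pairwise fun i j => X i ⟂ᵢ[μ] X j)
    (hident : ∀ i, IdentDistrib (X i) (X 0) μ μ) {f : ℝ → ℝ} (hf : Measurable f)
    (hfX : Integrable (f ∘ X 0) μ) :
    ∀ᵐ ω ∂μ, Tendsto (fun n => ∫ y, f y ∂empiricalMeasure (X · ω) n) atTop
      (𝓝 (∫ y, f y ∂μ.map (X 0))) := by
  simp_rw [integral_empiricalMeasure, integral_map (hident 0).aemeasurable_fst
    hf.aestronglyMeasurable]
  exact strong_law_ae_real (fun i => f ∘ X i) hfX (fun i j hij => (hindep hij).comp hf hf)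
    fun i => (hident i).comp hf

theorem ae_tendstoUniformlyOn_measureReal_Ioi_empiricalMeasure [IsFiniteMeasure μ]
    (hindep : Pairwise fun i j => X i ⟂ᵢ[μ] X j) (hident : ∀ i, IdentDistrib (X i) (X 0) μ μ)
    {K : Set ℝ} (hK : IsCompact K) :
    ∀ᵐ ω ∂μ, TendstoUniformlyOn (fun n u => (empiricalMeasure (X · ω) n).real (Ioi u))
      (fun u => (μ.map (X 0)).real (Ioi u)) atTop K := by
  obtain ⟨Q, hQ, hunif⟩ :=
    exists_countable_tendstoUniformlyOn_measureReal_Ioi (μ.map (X 0)) hK (atTop : Filter ℕ)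
  have hconv : ∀ {s : Set ℝ}, MeasurableSet s → ∀ᵐ ω ∂μ,
      Tendsto (fun n => (empiricalMeasure (X · ω) n).real s) atTop (𝓝 ((μ.map (X 0)).real s)) := by
    intro s hs
    simp_rw [← integral_indicator_one hs]
    refine ae_tendsto_integral_empiricalMeasure hindep hident (measurable_const.indicator hs) ?_
    exact (integrable_map_measure (by fun_prop) (hident 0).aemeasurable_fst).1
      ((integrable_const 1).indicator hs)
  filter_upwards [(ae_ball_iff hQ).2 fun s _ => (hconv measurableSet_Ioi).and
    (hconv measurableSet_Ici)] with ω hω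
  exact hunif _ (fun _ => inferInstance) hω

theorem ae_tendstoUniformlyOn_stopLoss_empiricalMeasure [IsProbabilityMeasure μ]
    (hindep : Pairwise fun i j => X i ⟂ᵢ[μ] X j) (hident : ∀ i, IdentDistrib (X i) (X 0) μ μ)
    (hX : Integrable (X 0) μ) {K : Set ℝ} (hK : IsCompact K) :
    ∀ᵐ ω ∂μ, TendstoUniformlyOn (fun n => stopLoss (empiricalMeasure (X · ω) n))
      (stopLoss (μ.map (X 0))) atTop K := by
  have hq : ∀ᵐ ω ∂μ, ∀ q : ℚ, Tendsto (fun n => stopLoss (empiricalMeasure (X · ω) n) q) atTop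
      (𝓝 (stopLoss (μ.map (X 0)) q)) :=
    ae_all_iff.2 fun q => ae_tendsto_integral_empiricalMeasure hindep hident
      (f := fun y => max (y - q) 0) (by fun_prop)
      (hX.sub (integrable_const _)).pos_part
  filter_upwards [hq] with ω hω
  exact tendstoUniformlyOn_of_lipschitzWith_of_denseRange Rat.denseRange_cast hK
    (fun n => lipschitzWith_stopLoss _ (integrable_empiricalMeasure _ n id))
    (lipschitzWith_stopLoss _ ((integrable_map_measure (by fun_prop)
      (hident 0).aemeasurable_fst).2 hX)) hω

theorem ae_tendstoUniformlyOn_meanExcess_empiricalMeasure [IsProbabilityMeasure μ]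
    (hindep : Pairwise fun i j => X i ⟂ᵢ[μ] X j) (hident : ∀ i, IdentDistrib (X i) (X 0) μ μ)
    (hX : Integrable (X 0) μ) (a : ℝ) {b : ℝ} (hb : 0 < μ.map (X 0) (Ioi b)) :
    ∀ᵐ ω ∂μ, TendstoUniformlyOn (fun n => meanExcess (empiricalMeasure (X · ω) n))
      (meanExcess (μ.map (X 0))) atTop (Icc a b) := by
  obtain ⟨C, hC⟩ := (isCompact_Icc (a := a) (b := b)).exists_bound_of_continuousOn
    (lipschitzWith_stopLoss _ ((integrable_map_measure (by fun_prop)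
      (hident 0).aemeasurable_fst).2 hX)).continuous.continuousOn
  simp only [Real.norm_eq_abs] at hC
  have hsurv : ∀ u ∈ Icc a b, (μ.map (X 0)).real (Ioi b) ≤ |(μ.map (X 0)).real (Ioi u)| :=
    fun u hu => (measureReal_mono (Ioi_subset_Ioi hu.2)).trans (le_abs_self _)
  filter_upwards [ae_tendstoUniformlyOn_stopLoss_empiricalMeasure hindep hident hX isCompact_Icc,
    ae_tendstoUniformlyOn_measureReal_Ioi_empiricalMeasure hindep hident isCompact_Icc]
    with ω hstop hsurv'
  exact hstop.div₀ hsurv' hC (ENNReal.toReal_pos hb.ne' (measure_ne_top _ _)) hsurv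

end StrongLaw

theorem empirical_mean_excess_uniform_consistency_general
    {Ω : Type*} [MeasurableSpace Ω] (μ : Measure Ω) [IsProbabilityMeasure μ]
    (X : ℕ → Ω → ℝ) (hmeas : ∀ i, Measurable (X i))
    (hindep : iIndepFun X μ)
    (hident : ∀ i, Measure.map (X i) μ = Measure.map (X 0) μ)
    (hint : Integrable (X 0) μ)
    (b : ℝ) (hb : 0 < μ {ω | b < X 0 ω})  -- F(b) < 1
    (M : ℝ → ℝ)
    (hM : ∀ u, M u =
      (∫ ω in {ω | u < X 0 ω}, (X 0 ω - u) ∂μ) / (μ {ω | u < X 0 ω}).toReal)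
    (Mhat : ℕ → ℝ → Ω → ℝ)
    (hMhat : ∀ n u ω, Mhat n u ω =
      (∑ i ∈ Finset.range n, if u < X i ω then X i ω - u else 0)
        / (∑ i ∈ Finset.range n, if u < X i ω then (1 : ℝ) else 0)) :
    ∀ᵐ ω ∂μ,
      Tendsto (fun n : ℕ => sSup ((fun u => |Mhat n u ω - M u|) '' Icc 0 b))
        atTop (𝓝 0) := by
  have hM' : M = meanExcess (μ.map (X 0)) :=
    funext fun u => (hM u).trans (meanExcess_map (hmeas 0) u).symm
  have hMhat' : Mhat = fun n u ω => meanExcess (empiricalMeasure (X · ω) n) u := by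
    ext n u ω
    rw [hMhat, meanExcess_empiricalMeasure]
  have hb' : 0 < μ.map (X 0) (Ioi b) := by rwa [Measure.map_apply (hmeas 0) measurableSet_Ioi]
  filter_upwards [ae_tendstoUniformlyOn_meanExcess_empiricalMeasure
    (fun i j hij => hindep.indepFun hij)
    (fun i => ⟨(hmeas i).aemeasurable, (hmeas 0).aemeasurable, hident i⟩) hint 0 hb'] with ω hω
  subst hM' hMhat'
  exact hω.tendsto_sSup_abs_sub

/-- Yang: uniform strong consistency of the empirical mean
excess function: for i.i.d. nonnegative integrable `X_i` and `b` with
`F(b) < 1`, `sup_{0 ≤ u ≤ b} |M̂_n(u) - M(u)| → 0` almost surely. -/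
theorem empirical_mean_excess_uniform_consistency
    {Ω : Type*} [MeasurableSpace Ω] (μ : Measure Ω) [IsProbabilityMeasure μ]
    (X : ℕ → Ω → ℝ) (hmeas : ∀ i, Measurable (X i))
    (hindep : iIndepFun X μ)
    (hident : ∀ i, Measure.map (X i) μ = Measure.map (X 0) μ)
    (hnonneg : ∀ i ω, 0 ≤ X i ω)
    (hint : Integrable (X 0) μ)
    (b : ℝ) (hb : 0 < μ {ω | b < X 0 ω})  -- F(b) < 1
    (M : ℝ → ℝ)
    (hM : ∀ u, M u =
      (∫ ω in {ω | u < X 0 ω}, (X 0 ω - u) ∂μ) / (μ {ω | u < X 0 ω}).toReal)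
    (Mhat : ℕ → ℝ → Ω → ℝ)
    (hMhat : ∀ n u ω, Mhat n u ω =
      (∑ i ∈ Finset.range n, if u < X i ω then X i ω - u else 0)
        / (∑ i ∈ Finset.range n, if u < X i ω then (1 : ℝ) else 0)) :
    ∀ᵐ ω ∂μ,
      Tendsto (fun n : ℕ => sSup ((fun u => |Mhat n u ω - M u|) '' Icc 0 b))
        atTop (𝓝 0) :=
  empirical_mean_excess_uniform_consistency_general μ X hmeas hindep hident hint b hb M hM Mhat
    hMhat
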